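/- arXiv:1703.10228 — 3 statements merged into one kernel-verified Lean document; each statement's English description precedes it below -/
import Mathlib

section
/- Let Σ be a rational polyhedral fan in N_ℝ, where N is a lattice, and let w ∈ N. If the support |Σ| contains |Σ| + w, then |Σ| is star-shaped around w, i.e., for every point w' ∈ |Σ|, the segment from w to w' is contained in |Σ|. -/
/-- A rational polyhedral cone in `ℝ^n`: cut out by finitely many linear
inequalities with rational coefficients. -/
def IsRatPolyCone {n : ℕ} (C : Set (Fin n → ℝ)) : Prop :=
  ∃ (m : ℕ) (f : Fin m → ((Fin n → ℝ) →ₗ[ℝ] ℝ)),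
    (∀ i j, ∃ q : ℚ, f i (Pi.single j 1) = (q : ℝ)) ∧
    C = {v | ∀ i, 0 ≤ f i v}

/-- If the support of a rational polyhedral fan contains its translate by the
lattice point `w`, then the support is star-shaped around `w`. -/
theorem stmt0 {n : ℕ} {ι : Type} [Finite ι] (C : ι → Set (Fin n → ℝ))
    (hC : ∀ i, IsRatPolyCone (C i)) (wz : Fin n → ℤ)
    (w : Fin n → ℝ) (hw : w = fun j => (wz j : ℝ))
    (S : Set (Fin n → ℝ)) (hS : S = ⋃ i, C i)
    (hsub : ∀ x ∈ S, x + w ∈ S) :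
    ∀ w' ∈ S, segment ℝ w w' ⊆ S := by
  -- S is closed under nonnegative scaling
  have hcone : ∀ c : ℝ, 0 ≤ c → ∀ x ∈ S, c • x ∈ S := by
    intro c hc x hx
    rw [hS] at hx ⊢
    obtain ⟨i, hi⟩ := Set.mem_iUnion.1 hx
    refine Set.mem_iUnion.2 ⟨i, ?_⟩
    obtain ⟨m, f, _, hceq⟩ := hC i
    rw [hceq] at hi ⊢
    intro j
    rw [map_smul]
    exact mul_nonneg hc (hi j)
  intro w' hw' x hx
  have h0 : (0 : Fin n → ℝ) ∈ S := by
    simpa using hcone 0 le_rfl w' hw'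
  have hwS : w ∈ S := by
    simpa using hsub 0 h0
  obtain ⟨a, b, ha, hb, hab, hxe⟩ := hx
  rcases eq_or_lt_of_le ha with ha0 | hapos
  · -- a = 0, so x = w'
    have : x = w' := by
      rw [← hxe, ← ha0]
      have : b = 1 := by linarith
      simp [this]
    rw [this]; exact hw'
  · -- a > 0 : x = a • ((b/a) • w' + w)
    have hy : (b / a) • w' ∈ S := hcone _ (div_nonneg hb ha) w' hw'
    have hyw : (b / a) • w' + w ∈ S := hsub _ hy
    have := hcone a ha _ hyw
    have hxeq : x = a • ((b / a) • w' + w) := by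
      rw [← hxe, smul_add, smul_smul]
      have : a * (b / a) = b := by field_simp
      rw [this]
      abel
    rw [hxeq]; exact this
end

section
/- There exists a unique ℤ-valued additive invariant χ' on the Boolean algebra generated by rational polyhedra in ℚ^n (additive on disjoint unions of constructible sets) that assigns the value 1 to every non-empty polyhedron. -/
variable {V : Type} [AddCommGroup V] [Module ℚ V]

/-- A (rational) polyhedron in a `ℚ`-vector space: a finite intersection of
closed affine half-spaces. -/
def IsPolyhedron (S : Set V) : Prop :=
  ∃ (m : ℕ) (f : Fin m → (V →ᵃ[ℚ] ℚ)), S = {v | ∀ i, 0 ≤ f i v}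

/-- Constructible subsets: the Boolean algebra generated by polyhedra. -/
inductive IsConstructible : Set V → Prop
  | poly {S : Set V} : IsPolyhedron S → IsConstructible S
  | compl {S : Set V} : IsConstructible S → IsConstructible Sᶜ
  | union {S T : Set V} : IsConstructible S → IsConstructible T →
      IsConstructible (S ∪ T)

/-- `χ` is a bounded Euler characteristic: a `ℤ`-valued invariant of
constructible sets, additive on disjoint unions, assigning `1` to every
non-empty polyhedron. -/
def IsEulerChar (χ : Set V → ℤ) : Prop :=
  (∀ A B : Set V, IsConstructible A → IsConstructible B → Disjoint A B →
    χ (A ∪ B) = χ A + χ B) ∧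
  (∀ S : Set V, IsPolyhedron S → S.Nonempty → χ S = 1)

/-!
Uniqueness: the constructible sets on which two Euler characteristics agree contain the
polyhedra, which are closed under intersection, and are closed under complements and disjoint
unions; by the finitely additive π-λ argument they are all constructible sets.

Existence: `χ S` is the Euler integral of the indicator of `S`, computed one coordinate at a
time. On `ℚ` the integral of a step function is its value at `+∞` plus the sum of its jumps
`f x - f (x⁺)`; it is additive and equals `1` on every non-empty closed interval. The fibres of a
polyhedron in `ℚ × W` are such intervals, so integrating out the first coordinate sends the
indicator of a polyhedron to the indicator of its projection, again a polyhedron by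
Fourier–Motzkin elimination. Hence the iterated integral is additive on integer combinations of
indicators of polyhedra, which include the indicators of constructible sets, and is `1` on every
non-empty polyhedron.
-/

variable {W : Type} [AddCommGroup W] [Module ℚ W]

section Polyhedron

lemma isPolyhedron_univ : IsPolyhedron (Set.univ : Set V) :=
  ⟨0, Fin.elim0, by ext; simp⟩

lemma IsPolyhedron.of_finite {ι : Type} [Finite ι] (f : ι → V →ᵃ[ℚ] ℚ) :
    IsPolyhedron {v | ∀ i, 0 ≤ f i v} := by
  obtain ⟨m, ⟨e⟩⟩ := Finite.exists_equiv_fin ι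
  exact ⟨m, f ∘ e.symm, by ext v; exact ⟨fun h i => h _, fun h i => by simpa using h (e i)⟩⟩

lemma IsPolyhedron.inter {S T : Set V} (hS : IsPolyhedron S) (hT : IsPolyhedron T) :
    IsPolyhedron (S ∩ T) := by
  obtain ⟨m, f, rfl⟩ := hS
  obtain ⟨m', g, rfl⟩ := hT
  convert IsPolyhedron.of_finite (Sum.elim f g) using 1
  ext v
  simp [Sum.forall]

lemma IsPolyhedron.preimage {P : Set V} (hP : IsPolyhedron P) (e : W →ᵃ[ℚ] V) :
    IsPolyhedron (e ⁻¹' P) := by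
  obtain ⟨m, f, rfl⟩ := hP
  exact ⟨m, fun i => (f i).comp e, rfl⟩

end Polyhedron

/-- The finitely additive analogue of `MeasurableSpace.DynkinSystem.GenerateHas`. -/
inductive GenerateFinDynkin {α : Type*} (C : Set (Set α)) : Set α → Prop
  | basic {s : Set α} : s ∈ C → GenerateFinDynkin C s
  | univ : GenerateFinDynkin C Set.univ
  | compl {s : Set α} : GenerateFinDynkin C s → GenerateFinDynkin C sᶜ
  | disjoint_union {s t : Set α} : Disjoint s t → GenerateFinDynkin C s →
      GenerateFinDynkin C t → GenerateFinDynkin C (s ∪ t)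

namespace GenerateFinDynkin

variable {α : Type*} {C : Set (Set α)} {s t : Set α}

lemma inter_of_forall_inter_mem (hs : GenerateFinDynkin C s)
    (hC : ∀ c ∈ C, GenerateFinDynkin C (s ∩ c)) (ht : GenerateFinDynkin C t) :
    GenerateFinDynkin C (s ∩ t) := by
  induction ht with
  | basic hc => exact hC _ hc
  | univ => simpa
  | @compl t _ ih =>
    have : s ∩ tᶜ = (sᶜ ∪ s ∩ t)ᶜ := by ext; simp; tauto
    rw [this]
    exact (disjoint_union (disjoint_compl_left.mono_right Set.inter_subset_left) hs.compl ih).compl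
  | disjoint_union hd _ _ ih₁ ih₂ =>
    rw [Set.inter_union_distrib_left]
    exact disjoint_union (hd.mono Set.inter_subset_right Set.inter_subset_right) ih₁ ih₂

/-- Dynkin's π-λ argument: over an intersection-closed `C` the closure is a Boolean algebra. -/
lemma inter (hC : ∀ c ∈ C, ∀ d ∈ C, c ∩ d ∈ C) (hs : GenerateFinDynkin C s)
    (ht : GenerateFinDynkin C t) : GenerateFinDynkin C (s ∩ t) := by
  refine hs.inter_of_forall_inter_mem (fun c hc => ?_) ht
  rw [Set.inter_comm]
  exact (basic hc).inter_of_forall_inter_mem (fun d hd => basic (hC c hc d hd)) hs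

lemma union (hC : ∀ c ∈ C, ∀ d ∈ C, c ∩ d ∈ C) (hs : GenerateFinDynkin C s)
    (ht : GenerateFinDynkin C t) : GenerateFinDynkin C (s ∪ t) := by
  rw [← Set.union_sdiff_self, Set.sdiff_eq]
  exact disjoint_union (Set.disjoint_left.2 fun _ h h' => h'.2 h) hs (inter hC ht hs.compl)

end GenerateFinDynkin

lemma IsConstructible.generateFinDynkin {S : Set V} (hS : IsConstructible S) :
    GenerateFinDynkin {P | IsPolyhedron P} S := by
  have hC : ∀ P ∈ {P : Set V | IsPolyhedron P}, ∀ Q ∈ {P : Set V | IsPolyhedron P},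
      P ∩ Q ∈ {P : Set V | IsPolyhedron P} := fun _ hP _ hQ => IsPolyhedron.inter hP hQ
  induction hS with
  | poly hP => exact .basic hP
  | compl _ ih => exact ih.compl
  | union _ _ ih₁ ih₂ => exact ih₁.union hC ih₂

lemma GenerateFinDynkin.isConstructible {S : Set V}
    (hS : GenerateFinDynkin {P | IsPolyhedron P} S) : IsConstructible S := by
  induction hS with
  | basic hP => exact .poly hP
  | univ => exact .poly isPolyhedron_univ
  | compl _ ih => exact ih.compl
  | disjoint_union _ _ _ ih₁ ih₂ => exact ih₁.union ih₂

section Uniqueness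

variable {χ χ₁ χ₂ : Set V → ℤ}

lemma IsEulerChar.map_univ (h : IsEulerChar χ) : χ Set.univ = 1 :=
  h.2 _ isPolyhedron_univ Set.univ_nonempty

lemma IsEulerChar.map_compl (h : IsEulerChar χ) {S : Set V} (hS : IsConstructible S) :
    χ Sᶜ = 1 - χ S := by
  have := h.1 S Sᶜ hS hS.compl disjoint_compl_right
  rw [Set.union_compl_self, h.map_univ] at this
  omega

lemma IsEulerChar.map_empty (h : IsEulerChar χ) : χ ∅ = 0 := by
  simpa [h.map_univ] using h.map_compl (.poly isPolyhedron_univ)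

lemma IsEulerChar.eq_of_isConstructible (h₁ : IsEulerChar χ₁) (h₂ : IsEulerChar χ₂)
    {S : Set V} (hS : IsConstructible S) : χ₁ S = χ₂ S := by
  have hD := hS.generateFinDynkin
  clear hS
  induction hD with
  | @basic P hP =>
    obtain rfl | hne := P.eq_empty_or_nonempty
    · rw [h₁.map_empty, h₂.map_empty]
    · rw [h₁.2 P hP hne, h₂.2 P hP hne]
  | univ => rw [h₁.map_univ, h₂.map_univ]
  | compl hs ih => rw [h₁.map_compl hs.isConstructible, h₂.map_compl hs.isConstructible, ih]
  | disjoint_union hd hs ht ih₁ ih₂ =>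
    rw [h₁.1 _ _ hs.isConstructible ht.isConstructible hd,
      h₂.1 _ _ hs.isConstructible ht.isConstructible hd, ih₁, ih₂]

end Uniqueness

section EulerIntegralOne

open Filter Topology Function

/-- The Euler integral `∫ f dχ` of a step function: a closed interval `[a, b]` has its only
jump at `b`, so it gets `1`, while `(a, b]` gets `0`. Junk outside `tameFunctions`. -/
noncomputable def eulerIntegral₁ (f : ℚ → ℤ) : ℤ :=
  limUnder atTop f + ∑ᶠ x, (f x - rightLim f x)

lemma rightLim_add {f g : ℚ → ℤ} {x : ℚ} {c d : ℤ} (hf : Tendsto f (𝓝[>] x) (𝓝 c))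
    (hg : Tendsto g (𝓝[>] x) (𝓝 d)) : rightLim (f + g) x = rightLim f x + rightLim g x := by
  rw [rightLim_eq_of_tendsto hf, rightLim_eq_of_tendsto hg,
    rightLim_eq_of_tendsto (f := f + g) (hf.add hg)]

lemma rightLim_neg {f : ℚ → ℤ} {x : ℚ} {c : ℤ} (hf : Tendsto f (𝓝[>] x) (𝓝 c)) :
    rightLim (-f) x = -rightLim f x := by
  rw [rightLim_eq_of_tendsto hf, rightLim_eq_of_tendsto (f := -f) hf.neg]

def tameFunctions : AddSubgroup (ℚ → ℤ) where
  carrier := {f | (∀ x, ∃ c, Tendsto f (𝓝[>] x) (𝓝 c)) ∧ (∃ c, Tendsto f atTop (𝓝 c)) ∧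
    (support fun x => f x - rightLim f x).Finite}
  zero_mem' := by
    refine ⟨fun x => ⟨0, tendsto_const_nhds⟩, ⟨0, tendsto_const_nhds⟩, ?_⟩
    simp [rightLim_eq_of_tendsto (f := (0 : ℚ → ℤ)) tendsto_const_nhds]
  add_mem' := by
    rintro f g ⟨hf, ⟨c, hc⟩, hfs⟩ ⟨hg, ⟨d, hd⟩, hgs⟩
    refine ⟨fun x => ?_, ⟨c + d, hc.add hd⟩, (hfs.union hgs).subset fun x hx => ?_⟩
    · obtain ⟨c', hc'⟩ := hf x
      obtain ⟨d', hd'⟩ := hg x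
      exact ⟨c' + d', hc'.add hd'⟩
    · obtain ⟨c', hc'⟩ := hf x
      obtain ⟨d', hd'⟩ := hg x
      by_contra h
      simp only [mem_support, rightLim_add hc' hd', Set.mem_union, not_or, not_not] at hx h
      simp only [Pi.add_apply] at hx
      omega
  neg_mem' := by
    rintro f ⟨hf, ⟨c, hc⟩, hfs⟩
    refine ⟨fun x => ?_, ⟨-c, hc.neg⟩, hfs.subset fun x hx => ?_⟩
    · obtain ⟨c', hc'⟩ := hf x
      exact ⟨-c', hc'.neg⟩
    · obtain ⟨c', hc'⟩ := hf x
      simp only [mem_support, rightLim_neg hc', Pi.neg_apply] at hx ⊢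
      omega

lemma eulerIntegral₁_add {f g : ℚ → ℤ} (hf : f ∈ tameFunctions) (hg : g ∈ tameFunctions) :
    eulerIntegral₁ (f + g) = eulerIntegral₁ f + eulerIntegral₁ g := by
  obtain ⟨hfx, ⟨c, hc⟩, hfs⟩ := hf
  obtain ⟨hgx, ⟨d, hd⟩, hgs⟩ := hg
  have hjump : ∀ x, (f + g) x - rightLim (f + g) x = (f x - rightLim f x) + (g x - rightLim g x) :=
    fun x => by
      obtain ⟨c, hc⟩ := hfx x
      obtain ⟨d, hd⟩ := hgx x
      rw [rightLim_add hc hd, Pi.add_apply]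
      ring
  simp only [eulerIntegral₁, hjump, finsum_add_distrib hfs hgs, hc.limUnder_eq, hd.limUnder_eq,
    Tendsto.limUnder_eq (g := f + g) (hc.add hd)]
  ring

lemma eulerIntegral₁_neg {f : ℚ → ℤ} (hf : f ∈ tameFunctions) :
    eulerIntegral₁ (-f) = -eulerIntegral₁ f := by
  obtain ⟨hfx, ⟨c, hc⟩, -⟩ := hf
  have hjump : ∀ x, (-f) x - rightLim (-f) x = -(f x - rightLim f x) := fun x => by
    obtain ⟨c, hc⟩ := hfx x
    rw [rightLim_neg hc, Pi.neg_apply]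
    ring
  simp only [eulerIntegral₁, hjump, finsum_neg_distrib, hc.limUnder_eq,
    Tendsto.limUnder_eq (g := -f) hc.neg]
  ring

lemma eulerIntegral₁_sub {f g : ℚ → ℤ} (hf : f ∈ tameFunctions) (hg : g ∈ tameFunctions) :
    eulerIntegral₁ (f - g) = eulerIntegral₁ f - eulerIntegral₁ g := by
  rw [sub_eq_add_neg, eulerIntegral₁_add hf (neg_mem hg), eulerIntegral₁_neg hg, sub_eq_add_neg]

lemma const_mem_tameFunctions (c : ℤ) : (fun _ => c) ∈ tameFunctions := by
  refine ⟨fun x => ⟨c, tendsto_const_nhds⟩, ⟨c, tendsto_const_nhds⟩, ?_⟩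
  simp [rightLim_eq_of_tendsto (tendsto_const_nhds (x := c))]

lemma eulerIntegral₁_const (c : ℤ) : eulerIntegral₁ (fun _ => c) = c := by
  simp [eulerIntegral₁, rightLim_eq_of_tendsto (tendsto_const_nhds (x := c)),
    tendsto_const_nhds.limUnder_eq]

end EulerIntegralOne

section Rays

open Filter Topology Function

variable {S : Set ℚ} {b : ℚ}

-- The hypotheses `Iio b ⊆ S ⊆ Iic b` treat the rays `Iio b` and `Iic b` at once.
lemma indicator_eq_of_ne_of_Iio_subset (h₁ : Set.Iio b ⊆ S) (h₂ : S ⊆ Set.Iic b) {x : ℚ}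
    (hx : x ≠ b) : S.indicator (1 : ℚ → ℤ) x = (Set.Iio b).indicator 1 x := by
  rcases hx.lt_or_gt with hx | hx
  · rw [Set.indicator_of_mem (h₁ hx), Set.indicator_of_mem (Set.mem_Iio.2 hx)]
  · rw [Set.indicator_of_notMem (fun h => (h₂ h).not_gt hx),
      Set.indicator_of_notMem (Set.notMem_Iio.2 hx.le)]

lemma tendsto_indicator_nhdsGT_of_Iio_subset (h₁ : Set.Iio b ⊆ S) (h₂ : S ⊆ Set.Iic b)
    (x : ℚ) : Tendsto (S.indicator 1) (𝓝[>] x) (𝓝 ((Set.Iio b).indicator (1 : ℚ → ℤ) x)) := by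
  rw [nhds_discrete, tendsto_pure]
  rcases lt_or_ge x b with hx | hx
  · filter_upwards [Ioo_mem_nhdsGT hx] with z hz
    rw [Set.indicator_of_mem (h₁ hz.2), Set.indicator_of_mem (Set.mem_Iio.2 hx), Pi.one_apply,
      Pi.one_apply]
  · filter_upwards [self_mem_nhdsWithin] with z hz
    rw [indicator_eq_of_ne_of_Iio_subset h₁ h₂ (hx.trans_lt hz).ne',
      Set.indicator_of_notMem (Set.notMem_Iio.2 (hx.trans_lt hz).le),
      Set.indicator_of_notMem (Set.notMem_Iio.2 hx)]

lemma tendsto_indicator_atTop_of_subset_Iic (h₂ : S ⊆ Set.Iic b) :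
    Tendsto (S.indicator (1 : ℚ → ℤ)) atTop (𝓝 0) := by
  rw [nhds_discrete, tendsto_pure]
  filter_upwards [eventually_gt_atTop b] with z hz
  exact Set.indicator_of_notMem (fun h => (h₂ h).not_gt hz) _

lemma indicator_mem_tameFunctions_of_Iio_subset (h₁ : Set.Iio b ⊆ S) (h₂ : S ⊆ Set.Iic b) :
    S.indicator 1 ∈ tameFunctions := by
  refine ⟨fun x => ⟨_, tendsto_indicator_nhdsGT_of_Iio_subset h₁ h₂ x⟩,
    ⟨0, tendsto_indicator_atTop_of_subset_Iic h₂⟩, (Set.finite_singleton b).subset fun x hx => ?_⟩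
  by_contra hxb
  rw [mem_support, rightLim_eq_of_tendsto (tendsto_indicator_nhdsGT_of_Iio_subset h₁ h₂ x),
    indicator_eq_of_ne_of_Iio_subset h₁ h₂ hxb, sub_self] at hx
  exact hx rfl

lemma eulerIntegral₁_indicator_of_Iio_subset (h₁ : Set.Iio b ⊆ S) (h₂ : S ⊆ Set.Iic b) :
    eulerIntegral₁ (S.indicator 1) = S.indicator 1 b := by
  have hjump : ∀ x, rightLim (S.indicator (1 : ℚ → ℤ)) x = (Set.Iio b).indicator 1 x :=
    fun x => rightLim_eq_of_tendsto (tendsto_indicator_nhdsGT_of_Iio_subset h₁ h₂ x)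
  rw [eulerIntegral₁, (tendsto_indicator_atTop_of_subset_Iic h₂).limUnder_eq,
    finsum_eq_single _ b fun x hx => ?_]
  · simp [hjump]
  · rw [hjump, indicator_eq_of_ne_of_Iio_subset h₁ h₂ hx, sub_self]

lemma setOf_coe_le_coe_eq_Iic (b : ℚ) : {t : ℚ | (t : WithTop ℚ) ≤ b} = Set.Iic b := by
  ext
  simp

lemma setOf_coe_lt_coe_eq_Iio (b : ℚ) : {t : ℚ | (t : WithBot ℚ) < b} = Set.Iio b := by
  ext
  simp

lemma indicator_le_mem_tameFunctions (u : WithTop ℚ) :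
    {t : ℚ | (t : WithTop ℚ) ≤ u}.indicator 1 ∈ tameFunctions := by
  induction u using WithTop.recTopCoe with
  | top =>
    simp only [le_top, Set.ofPred_true, Set.indicator_univ]
    exact const_mem_tameFunctions 1
  | coe b =>
    rw [setOf_coe_le_coe_eq_Iic]
    exact indicator_mem_tameFunctions_of_Iio_subset Set.Iio_subset_Iic_self subset_rfl

lemma eulerIntegral₁_indicator_le (u : WithTop ℚ) :
    eulerIntegral₁ ({t : ℚ | (t : WithTop ℚ) ≤ u}.indicator 1) = 1 := by
  induction u using WithTop.recTopCoe with
  | top =>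
    simp only [le_top, Set.ofPred_true, Set.indicator_univ]
    exact eulerIntegral₁_const 1
  | coe b =>
    rw [setOf_coe_le_coe_eq_Iic,
      eulerIntegral₁_indicator_of_Iio_subset Set.Iio_subset_Iic_self subset_rfl]
    simp

lemma indicator_lt_mem_tameFunctions (l : WithBot ℚ) :
    {t : ℚ | (t : WithBot ℚ) < l}.indicator 1 ∈ tameFunctions := by
  induction l using WithBot.recBotCoe with
  | bot => simpa using const_mem_tameFunctions 0
  | coe b =>
    rw [setOf_coe_lt_coe_eq_Iio]
    exact indicator_mem_tameFunctions_of_Iio_subset subset_rfl Set.Iio_subset_Iic_self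

lemma eulerIntegral₁_indicator_lt (l : WithBot ℚ) :
    eulerIntegral₁ ({t : ℚ | (t : WithBot ℚ) < l}.indicator 1) = 0 := by
  induction l using WithBot.recBotCoe with
  | bot => simpa using eulerIntegral₁_const 0
  | coe b =>
    rw [setOf_coe_lt_coe_eq_Iio,
      eulerIntegral₁_indicator_of_Iio_subset subset_rfl Set.Iio_subset_Iic_self]
    simp

end Rays

section ClosedInterval

/-- Closed intervals of `ℚ` with possibly infinite endpoints; the empty set is `[1, 0]`. -/
def IsClosedInterval (I : Set ℚ) : Prop :=
  ∃ (l : WithBot ℚ) (u : WithTop ℚ), I = {t : ℚ | l ≤ t ∧ (t : WithTop ℚ) ≤ u}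

lemma IsClosedInterval.inter {I J : Set ℚ} (hI : IsClosedInterval I) (hJ : IsClosedInterval J) :
    IsClosedInterval (I ∩ J) := by
  obtain ⟨l, u, rfl⟩ := hI
  obtain ⟨l', u', rfl⟩ := hJ
  refine ⟨max l l', min u u', ?_⟩
  ext t
  simp only [Set.mem_inter_iff, Set.mem_ofPred_eq, max_le_iff, le_min_iff]
  tauto

lemma isClosedInterval_setOf_nonneg_mul_add (α β : ℚ) :
    IsClosedInterval {t : ℚ | 0 ≤ α * t + β} := by
  rcases lt_trichotomy α 0 with hα | rfl | hα
  · refine ⟨⊥, ((-β / α : ℚ) : WithTop ℚ), ?_⟩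
    ext t
    simp only [Set.mem_ofPred_eq, bot_le, WithTop.coe_le_coe, le_div_iff_of_neg hα, true_and]
    constructor <;> intro <;> linarith
  · by_cases hβ : 0 ≤ β
    · exact ⟨⊥, ⊤, by ext; simp [hβ]⟩
    · refine ⟨(1 : ℚ), (0 : ℚ), ?_⟩
      ext t
      simp only [zero_mul, zero_add, hβ, Set.mem_ofPred_eq, WithBot.coe_le_coe, WithTop.coe_le_coe,
        false_iff, not_and, not_le]
      intro h
      linarith
  · refine ⟨((-β / α : ℚ) : WithBot ℚ), ⊤, ?_⟩
    ext t
    simp only [Set.mem_ofPred_eq, le_top, WithBot.coe_le_coe, div_le_iff₀ hα, and_true]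
    constructor <;> intro <;> linarith

lemma isClosedInterval_setOf_forall_nonneg_mul_add {ι : Type*} [Fintype ι] (α β : ι → ℚ) :
    IsClosedInterval {t : ℚ | ∀ i, 0 ≤ α i * t + β i} := by
  classical
  suffices h : ∀ s : Finset ι, IsClosedInterval {t : ℚ | ∀ i ∈ s, 0 ≤ α i * t + β i} by
    simpa using h Finset.univ
  intro s
  induction s using Finset.induction_on with
  | empty => exact ⟨⊥, ⊤, by ext; simp⟩
  | insert j s _ ih =>
    convert (isClosedInterval_setOf_nonneg_mul_add (α j) (β j)).inter ih using 1
    ext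
    simp

lemma indicator_interval_eq_sub {l : WithBot ℚ} {u : WithTop ℚ}
    (hne : {t : ℚ | l ≤ t ∧ (t : WithTop ℚ) ≤ u}.Nonempty) :
    {t : ℚ | l ≤ t ∧ (t : WithTop ℚ) ≤ u}.indicator (1 : ℚ → ℤ) =
      {t : ℚ | (t : WithTop ℚ) ≤ u}.indicator 1 - {t : ℚ | (t : WithBot ℚ) < l}.indicator 1 := by
  obtain ⟨t₀, hl₀, hu₀⟩ := hne
  have hsub : {t : ℚ | (t : WithBot ℚ) < l} ⊆ {t : ℚ | (t : WithTop ℚ) ≤ u} := fun t ht =>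
    (WithTop.coe_le_coe.2 (WithBot.coe_lt_coe.1 (ht.trans_le hl₀)).le).trans hu₀
  rw [← Set.indicator_sdiff hsub]
  congr 1
  ext
  simp [and_comm]

lemma IsClosedInterval.indicator_mem_tameFunctions {I : Set ℚ} (hI : IsClosedInterval I) :
    I.indicator 1 ∈ tameFunctions := by
  obtain ⟨l, u, rfl⟩ := hI
  obtain hI | hne := Set.eq_empty_or_nonempty {t : ℚ | l ≤ t ∧ (t : WithTop ℚ) ≤ u}
  · rw [hI, Set.indicator_empty]
    exact zero_mem _
  · rw [indicator_interval_eq_sub hne]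
    exact sub_mem (indicator_le_mem_tameFunctions u) (indicator_lt_mem_tameFunctions l)

lemma IsClosedInterval.eulerIntegral₁_indicator {I : Set ℚ} (hI : IsClosedInterval I)
    (hne : I.Nonempty) : eulerIntegral₁ (I.indicator 1) = 1 := by
  obtain ⟨l, u, rfl⟩ := hI
  rw [indicator_interval_eq_sub hne,
    eulerIntegral₁_sub (indicator_le_mem_tameFunctions u) (indicator_lt_mem_tameFunctions l),
    eulerIntegral₁_indicator_le, eulerIntegral₁_indicator_lt, sub_zero]

end ClosedInterval

section FourierMotzkin

variable {K ι : Type*} [Field K] [LinearOrder K] [IsStrictOrderedRing K] [Fintype ι]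

lemma exists_forall_nonneg_mul_add_of_pos {a b : ι → K} {i₀ : ι} (hi₀ : 0 < a i₀)
    (hzero : ∀ i, a i = 0 → 0 ≤ b i)
    (hpair : ∀ i j, 0 < a i → a j < 0 → 0 ≤ a i * b j - a j * b i) :
    ∃ t, ∀ i, 0 ≤ a i * t + b i := by
  classical
  obtain ⟨k, hk, hmax⟩ := Finset.exists_max_image (Finset.univ.filter fun i => 0 < a i)
    (fun i => -b i / a i) ⟨i₀, by simpa using hi₀⟩
  replace hk : 0 < a k := (Finset.mem_filter.1 hk).2
  refine ⟨-b k / a k, fun i => ?_⟩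
  rcases lt_trichotomy (a i) 0 with hi | hi | hi
  · have e : a i * (-b k / a k) + b i = (a k * b i - a i * b k) / a k := by
      field_simp
      ring
    rw [e]
    exact div_nonneg (hpair k i hk hi) hk.le
  · simpa [hi] using hzero i hi
  · have := hmax i (by simpa using hi)
    rw [div_le_iff₀ hi] at this
    linarith [this, mul_div_cancel₀ (-b k) hk.ne', mul_comm (a i) (-b k / a k)]

/-- Fourier–Motzkin elimination of one variable. -/
theorem exists_forall_nonneg_mul_add_iff (a b : ι → K) :
    (∃ t, ∀ i, 0 ≤ a i * t + b i) ↔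
      (∀ i, a i = 0 → 0 ≤ b i) ∧ ∀ i j, 0 < a i → a j < 0 → 0 ≤ a i * b j - a j * b i := by
  constructor
  · rintro ⟨t, ht⟩
    refine ⟨fun i hi => by simpa [hi] using ht i, fun i j hi hj => ?_⟩
    nlinarith [mul_nonneg (neg_nonneg.2 hj.le) (ht i), mul_nonneg hi.le (ht j)]
  rintro ⟨hzero, hpair⟩
  by_cases hpos : ∃ i, 0 < a i
  · obtain ⟨i₀, hi₀⟩ := hpos
    exact exists_forall_nonneg_mul_add_of_pos hi₀ hzero hpair
  by_cases hneg : ∃ i, a i < 0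
  · obtain ⟨i₀, hi₀⟩ := hneg
    obtain ⟨t, ht⟩ := exists_forall_nonneg_mul_add_of_pos (a := -a) (b := b) (i₀ := i₀)
      (by simpa using hi₀) (fun i hi => hzero i (by simpa using hi))
      (fun i j hi hj => by
        have := hpair j i (by simpa using hj) (by simpa using hi)
        simp only [Pi.neg_apply]
        linarith)
    exact ⟨-t, fun i => by simpa using ht i⟩
  simp only [not_exists, not_lt] at hpos hneg
  exact ⟨0, fun i => by simpa using hzero i (le_antisymm (hpos i) (hneg i))⟩

end FourierMotzkin

section Projection

lemma AffineMap.apply_mk_eq_mul_add (f : ℚ × W →ᵃ[ℚ] ℚ) (t : ℚ) (w : W) :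
    f (t, w) = f.linear (1, 0) * t + f (0, w) := by
  have h : ((t, w) : ℚ × W) = t • ((1 : ℚ), (0 : W)) +ᵥ ((0 : ℚ), w) := by simp
  rw [h, f.map_vadd, f.linear.map_smul, vadd_eq_add, smul_eq_mul, mul_comm]

lemma IsPolyhedron.isClosedInterval_fiber {P : Set (ℚ × W)} (hP : IsPolyhedron P) (w : W) :
    IsClosedInterval {t | (t, w) ∈ P} := by
  obtain ⟨m, f, rfl⟩ := hP
  convert isClosedInterval_setOf_forall_nonneg_mul_add (fun i => (f i).linear (1, 0))
    (fun i => f i (0, w)) using 1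
  exact Set.ext fun t => forall_congr' fun i => by rw [AffineMap.apply_mk_eq_mul_add]

lemma IsPolyhedron.image_snd {P : Set (ℚ × W)} (hP : IsPolyhedron P) :
    IsPolyhedron (Prod.snd '' P) := by
  obtain ⟨m, f, rfl⟩ := hP
  set a : Fin m → ℚ := fun i => (f i).linear (1, 0)
  set g : Fin m → W →ᵃ[ℚ] ℚ := fun i => (f i).comp (LinearMap.inr ℚ ℚ W).toAffineMap
  convert (IsPolyhedron.of_finite fun i : {i // a i = 0} => g i).inter
    (IsPolyhedron.of_finite fun p : {p : Fin m × Fin m // 0 < a p.1 ∧ a p.2 < 0} =>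
      a p.1.1 • g p.1.2 - a p.1.2 • g p.1.1) using 1
  ext w
  have hfib : w ∈ Prod.snd '' {v | ∀ i, 0 ≤ f i v} ↔ ∃ t, ∀ i, 0 ≤ a i * t + g i w := by
    simp only [Set.mem_image, Prod.exists, exists_eq_right]
    exact exists_congr fun t => forall_congr' fun i => by rw [AffineMap.apply_mk_eq_mul_add]; rfl
  rw [hfib, exists_forall_nonneg_mul_add_iff]
  simp

end Projection

section FiberIntegral

variable (V) in
def polyhedralFunctions : AddSubgroup (V → ℤ) :=
  AddSubgroup.closure {F | ∃ P, IsPolyhedron P ∧ P.indicator 1 = F}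

lemma IsPolyhedron.indicator_mem {P : Set V} (hP : IsPolyhedron P) :
    P.indicator 1 ∈ polyhedralFunctions V :=
  AddSubgroup.subset_closure ⟨P, hP, rfl⟩

lemma IsConstructible.indicator_mem {S : Set V} (hS : IsConstructible S) :
    S.indicator 1 ∈ polyhedralFunctions V := by
  have hD := hS.generateFinDynkin
  clear hS
  induction hD with
  | basic hP => exact IsPolyhedron.indicator_mem hP
  | univ => exact isPolyhedron_univ.indicator_mem
  | @compl s _ ih =>
    rw [Set.indicator_compl]
    exact sub_mem (by simpa using isPolyhedron_univ.indicator_mem) ih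
  | disjoint_union hd _ _ ih₁ ih₂ =>
    rw [Set.indicator_union_of_disjoint hd]
    exact add_mem ih₁ ih₂

lemma comp_mem_polyhedralFunctions {F : V → ℤ} (hF : F ∈ polyhedralFunctions V)
    (e : W →ᵃ[ℚ] V) : F ∘ e ∈ polyhedralFunctions W := by
  suffices polyhedralFunctions V ≤
      (polyhedralFunctions W).comap (LinearMap.funLeft ℤ ℤ e).toAddMonoidHom from this hF
  rw [polyhedralFunctions, AddSubgroup.closure_le]
  rintro _ ⟨P, hP, rfl⟩
  exact AddSubgroup.subset_closure ⟨e ⁻¹' P, hP.preimage e, rfl⟩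

lemma fiber_mem_tameFunctions {F : ℚ × W → ℤ} (hF : F ∈ polyhedralFunctions (ℚ × W)) (w : W) :
    (fun t => F (t, w)) ∈ tameFunctions := by
  suffices polyhedralFunctions (ℚ × W) ≤
      tameFunctions.comap (LinearMap.funLeft ℤ ℤ fun t : ℚ => (t, w)).toAddMonoidHom from this hF
  rw [polyhedralFunctions, AddSubgroup.closure_le]
  rintro _ ⟨P, hP, rfl⟩
  exact (hP.isClosedInterval_fiber w).indicator_mem_tameFunctions

noncomputable def fiberIntegral (F : ℚ × W → ℤ) (w : W) : ℤ :=
  eulerIntegral₁ fun t => F (t, w)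

lemma fiberIntegral_add {F G : ℚ × W → ℤ} (hF : F ∈ polyhedralFunctions (ℚ × W))
    (hG : G ∈ polyhedralFunctions (ℚ × W)) :
    fiberIntegral (F + G) = fiberIntegral F + fiberIntegral G :=
  funext fun w => eulerIntegral₁_add (fiber_mem_tameFunctions hF w) (fiber_mem_tameFunctions hG w)

lemma fiberIntegral_neg {F : ℚ × W → ℤ} (hF : F ∈ polyhedralFunctions (ℚ × W)) :
    fiberIntegral (-F) = -fiberIntegral F :=
  funext fun w => eulerIntegral₁_neg (fiber_mem_tameFunctions hF w)

lemma IsPolyhedron.fiberIntegral_indicator {P : Set (ℚ × W)} (hP : IsPolyhedron P) :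
    fiberIntegral (P.indicator 1) = (Prod.snd '' P).indicator 1 := by
  funext w
  have hfib : (fun t => P.indicator 1 (t, w)) = {t | (t, w) ∈ P}.indicator (1 : ℚ → ℤ) := rfl
  rw [fiberIntegral, hfib]
  by_cases hw : w ∈ Prod.snd '' P
  · obtain ⟨⟨t, _⟩, ht, rfl⟩ := hw
    rw [Set.indicator_of_mem (Set.mem_image_of_mem _ ht),
      (hP.isClosedInterval_fiber _).eulerIntegral₁_indicator ⟨t, ht⟩, Pi.one_apply]
  · have hempty : {t | (t, w) ∈ P} = ∅ :=
      Set.eq_empty_of_forall_notMem fun t ht => hw ⟨(t, w), ht, rfl⟩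
    rw [Set.indicator_of_notMem hw, hempty, Set.indicator_empty]
    exact eulerIntegral₁_const 0

lemma fiberIntegral_mem {F : ℚ × W → ℤ} (hF : F ∈ polyhedralFunctions (ℚ × W)) :
    fiberIntegral F ∈ polyhedralFunctions W := by
  induction hF using AddSubgroup.closure_induction with
  | mem F hF =>
    obtain ⟨P, hP, rfl⟩ := hF
    rw [hP.fiberIntegral_indicator]
    exact hP.image_snd.indicator_mem
  | zero =>
    convert zero_mem (polyhedralFunctions W)
    exact funext fun _ => eulerIntegral₁_const 0
  | add F G hF hG ihF ihG => rw [fiberIntegral_add hF hG]; exact add_mem ihF ihG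
  | neg F hF ih => rw [fiberIntegral_neg hF]; exact neg_mem ih

end FiberIntegral

section EulerIntegral

noncomputable def eulerIntegral : (n : ℕ) → ((Fin n → ℚ) → ℤ) → ℤ
  | 0, F => F 0
  | n + 1, F => eulerIntegral n (fiberIntegral (F ∘ Fin.consLinearEquiv ℚ fun _ => ℚ))

lemma eulerIntegral_add (n : ℕ) {F G : (Fin n → ℚ) → ℤ} (hF : F ∈ polyhedralFunctions _)
    (hG : G ∈ polyhedralFunctions _) :
    eulerIntegral n (F + G) = eulerIntegral n F + eulerIntegral n G := by
  induction n with
  | zero => rfl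
  | succ n ih =>
    set e := Fin.consLinearEquiv ℚ fun _ : Fin (n + 1) => ℚ
    have hF' : F ∘ e ∈ _ := comp_mem_polyhedralFunctions hF e.toLinearMap.toAffineMap
    have hG' : G ∘ e ∈ _ := comp_mem_polyhedralFunctions hG e.toLinearMap.toAffineMap
    simp only [eulerIntegral, Pi.add_comp]
    rw [fiberIntegral_add hF' hG', ih (fiberIntegral_mem hF') (fiberIntegral_mem hG')]

lemma IsPolyhedron.eulerIntegral_indicator {n : ℕ} {P : Set (Fin n → ℚ)} (hP : IsPolyhedron P)
    (hne : P.Nonempty) : eulerIntegral n (P.indicator 1) = 1 := by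
  induction n with
  | zero =>
    obtain ⟨v, hv⟩ := hne
    rw [eulerIntegral, Subsingleton.elim 0 v, Set.indicator_of_mem hv, Pi.one_apply]
  | succ n ih =>
    set e := Fin.consLinearEquiv ℚ fun _ : Fin (n + 1) => ℚ
    have hP' : IsPolyhedron (e ⁻¹' P) := hP.preimage e.toAffineMap
    rw [eulerIntegral, show P.indicator 1 ∘ e = (e ⁻¹' P).indicator 1 from rfl,
      hP'.fiberIntegral_indicator]
    exact ih hP'.image_snd ((e.surjective.nonempty_preimage.2 hne).image _)

end EulerIntegral

noncomputable def eulerChar (n : ℕ) (S : Set (Fin n → ℚ)) : ℤ :=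
  eulerIntegral n (S.indicator 1)

lemma isEulerChar_eulerChar (n : ℕ) : IsEulerChar (eulerChar n) := by
  refine ⟨fun A B hA hB hd => ?_, fun P hP hne => hP.eulerIntegral_indicator hne⟩
  rw [eulerChar, Set.indicator_union_of_disjoint hd]
  exact eulerIntegral_add n hA.indicator_mem hB.indicator_mem

/-- There is a unique additive `ℤ`-valued invariant on the Boolean algebra
generated by rational polyhedra in `ℚ^n` assigning `1` to every non-empty
polyhedron. -/
theorem stmt3 (n : ℕ) :
    ∃ χ : Set (Fin n → ℚ) → ℤ, IsEulerChar χ ∧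
      ∀ χ' : Set (Fin n → ℚ) → ℤ, IsEulerChar χ' →
        ∀ S : Set (Fin n → ℚ), IsConstructible S → χ' S = χ S :=
  ⟨eulerChar n, isEulerChar_eulerChar n,
    fun _ hχ' _ hS => hχ'.eq_of_isConstructible (isEulerChar_eulerChar n) hS⟩
end

section
/- Let w ∈ ℤ^{d_1} have all positive entries and w' ∈ ℤ^{d_2} have all negative entries, with d_2 > 0. Let Γ = (ℚ_{≥0})^{d_1} × (ℚ_{>0})^{d_2} ⊆ ℚ^{d_1+d_2}. Then the intersection of Γ with any line of the form v + ℚ·(w, w') is either empty, a half-open bounded segment (if d_1 > 0), or an open half-line (if d_1 = 0); in each non-empty case its bounded Euler characteristic is 0. -/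
variable {V : Type} [AddCommGroup V] [Module ℚ V]

/-! An affine function of `q` with nonzero slope is nonnegative (resp. positive) exactly on a
closed (resp. open) half-line, so the line meets `Γ` in `[a, ∞) ∩ (-∞, b)` with `a` the largest
of the lower bounds from the `w`-coordinates and `b` the smallest of the upper bounds from the
`w'`-coordinates (for `d₁ = 0` there is no lower bound). Both `[a, b)` and `(-∞, b)` are
differences `P \ B` of non-empty polyhedra `B ⊆ P` (`[a, b] \ {b}` and `ℚ \ [b, ∞)`), so additivity
gives `χ (P \ B) = χ P - χ B = 1 - 1 = 0`. -/

section HalfLines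

variable {K ι : Type*} [Field K] [LinearOrder K] [IsStrictOrderedRing K] [Fintype ι] [Nonempty ι]

lemma setOf_forall_nonneg_add_mul_eq_Ici (c w : ι → K) (hw : ∀ i, 0 < w i) :
    {q : K | ∀ i, 0 ≤ c i + q * w i} =
      Set.Ici (Finset.univ.sup' Finset.univ_nonempty fun i => -c i / w i) := by
  ext q
  simp only [Set.mem_ofPred_eq, Set.mem_Ici, Finset.sup'_le_iff, Finset.mem_univ, true_implies]
  refine forall_congr' fun i => ?_
  rw [div_le_iff₀ (hw i)]
  constructor <;> intro h <;> linarith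

lemma setOf_forall_pos_add_mul_eq_Iio (c w : ι → K) (hw : ∀ i, w i < 0) :
    {q : K | ∀ i, 0 < c i + q * w i} =
      Set.Iio (Finset.univ.inf' Finset.univ_nonempty fun i => c i / -w i) := by
  ext q
  simp only [Set.mem_ofPred_eq, Set.mem_Iio, Finset.lt_inf'_iff, Finset.mem_univ, true_implies]
  refine forall_congr' fun i => ?_
  rw [lt_div_iff₀ (neg_pos.2 (hw i))]
  constructor <;> intro h <;> linarith

end HalfLines

lemma IsConstructible.inter {A B : Set V}
    (hA : IsConstructible A) (hB : IsConstructible B) : IsConstructible (A ∩ B) := by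
  simpa only [Set.compl_union, compl_compl] using (hA.compl.union hB.compl).compl

lemma IsEulerChar.apply_diff_eq_zero
    {χ : Set V → ℤ} (hχ : IsEulerChar χ) {P B : Set V} (hP : IsPolyhedron P)
    (hB : IsPolyhedron B) (hBne : B.Nonempty) (hBP : B ⊆ P) : χ (P \ B) = 0 := by
  have hadd : χ (P \ B ∪ B) = χ (P \ B) + χ B :=
    hχ.1 _ _ ((IsConstructible.poly hP).inter (IsConstructible.poly hB).compl)
      (IsConstructible.poly hB) Set.disjoint_sdiff_left
  rw [Set.sdiff_union_of_subset hBP, hχ.2 P hP (hBne.mono hBP), hχ.2 B hB hBne] at hadd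
  omega

lemma isPolyhedron_Ici (a : ℚ) : IsPolyhedron (Set.Ici a) :=
  ⟨1, ![AffineMap.id ℚ ℚ - AffineMap.const ℚ ℚ a], by ext; simp⟩

lemma isPolyhedron_Icc (a b : ℚ) : IsPolyhedron (Set.Icc a b) :=
  ⟨2, ![AffineMap.id ℚ ℚ - AffineMap.const ℚ ℚ a, AffineMap.const ℚ ℚ b - AffineMap.id ℚ ℚ],
    by ext; simp [Fin.forall_fin_two]⟩

lemma IsEulerChar.apply_Ico_eq_zero {χ : Set ℚ → ℤ} (hχ : IsEulerChar χ) {a b : ℚ}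
    (hab : a < b) : χ (Set.Ico a b) = 0 := by
  rw [← Set.Icc_sdiff_right]
  refine hχ.apply_diff_eq_zero (isPolyhedron_Icc a b) ?_ (Set.singleton_nonempty b)
    (Set.singleton_subset_iff.2 (Set.right_mem_Icc.2 hab.le))
  simpa only [Set.Icc_self] using isPolyhedron_Icc b b

lemma IsEulerChar.apply_Iio_eq_zero {χ : Set ℚ → ℤ} (hχ : IsEulerChar χ) (b : ℚ) :
    χ (Set.Iio b) = 0 := by
  rw [← Set.compl_Ici, Set.compl_eq_univ_sdiff]
  exact hχ.apply_diff_eq_zero ⟨0, Fin.elim0, by simp⟩ (isPolyhedron_Ici b) Set.nonempty_Ici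
    (Set.subset_univ _)

/-- The intersection of `Γ = (ℚ≥0)^{d₁} × (ℚ>0)^{d₂}` with a line
`v + ℚ·(w,w')`, where `w` has positive integer entries and `w'` has negative
integer entries, parametrized by `q ↦ v + q·(w,w')`, is either empty, a
half-open bounded segment (if `d₁ > 0`), or an open half-line (if `d₁ = 0`);
in each non-empty case its bounded Euler characteristic vanishes. -/
theorem stmt9 {d1 d2 : ℕ} (hd2 : 0 < d2)
    (w : Fin d1 → ℤ) (hw : ∀ i, 0 < w i)
    (w' : Fin d2 → ℤ) (hw' : ∀ j, w' j < 0)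
    (v : (Fin d1 → ℚ) × (Fin d2 → ℚ))
    (T : Set ℚ)
    (hT : T = {q : ℚ | (∀ i, 0 ≤ v.1 i + q * (w i : ℚ)) ∧
      (∀ j, 0 < v.2 j + q * (w' j : ℚ))}) :
    (T = ∅ ∨ (0 < d1 ∧ ∃ a b : ℚ, a < b ∧ T = Set.Ico a b) ∨
      (d1 = 0 ∧ ∃ b : ℚ, T = Set.Iio b)) ∧
    (T.Nonempty → ∀ χ : Set ℚ → ℤ, IsEulerChar χ → χ T = 0) := by
  have : Nonempty (Fin d2) := ⟨⟨0, hd2⟩⟩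
  rw [Set.ofPred_and, setOf_forall_pos_add_mul_eq_Iio v.2 _ fun j => by exact_mod_cast hw' j] at hT
  set b := Finset.univ.inf' Finset.univ_nonempty fun j => v.2 j / -(w' j : ℚ)
  have hshape : T = ∅ ∨ (0 < d1 ∧ ∃ a b : ℚ, a < b ∧ T = Set.Ico a b) ∨
      (d1 = 0 ∧ ∃ b : ℚ, T = Set.Iio b) := by
    rcases Nat.eq_zero_or_pos d1 with rfl | hd1
    · exact Or.inr (Or.inr ⟨rfl, b, by simp [hT]⟩)
    have : Nonempty (Fin d1) := ⟨⟨0, hd1⟩⟩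
    rw [setOf_forall_nonneg_add_mul_eq_Ici v.1 _ fun i => by exact_mod_cast hw i,
      Set.Ici_inter_Iio] at hT
    set a := Finset.univ.sup' Finset.univ_nonempty fun i => -v.1 i / (w i : ℚ)
    by_cases hab : a < b
    · exact Or.inr (Or.inl ⟨hd1, a, b, hab, hT⟩)
    · exact Or.inl (hT.trans (Set.Ico_eq_empty hab))
  refine ⟨hshape, fun hne χ hχ => ?_⟩
  rcases hshape with hempty | ⟨-, a, b, hab, rfl⟩ | ⟨-, b, rfl⟩
  · exact absurd hempty hne.ne_empty
  · exact hχ.apply_Ico_eq_zero hab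
  · exact hχ.apply_Iio_eq_zero b
end
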